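/- Let Ω = {ρ < 0} ⊂ ℂ² be a bounded C^1 domain. If f = f₁ + f₂j is ψ-regular on Ω and of class C^1 on the closure of Ω, then on ∂Ω one has ∂̄_n f₁ = −conj(L(f₂)) and ∂̄_n f₂ = conj(L(f₁)); equivalently (∂̄_n − jL)f = 0 on ∂Ω. -/

import Mathlib

noncomputable section
open ComplexConjugate

/-- The quaternions, identified with `ℂ²` via `q = z₁ + z₂·j`, `z₁ = x₀+ix₁`, `z₂ = x₂+ix₃`. -/
abbrev Hq := Quaternion ℝ

def e1 : Hq := ⟨0, 1, 0, 0⟩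
def e2 : Hq := ⟨0, 0, 1, 0⟩
def e3 : Hq := ⟨0, 0, 0, 1⟩

/-- Directional (partial) derivative of an `Hq`-valued function. -/
def pd (f : Hq → Hq) (v q : Hq) : Hq := fderiv ℝ f q v

/-- The left Cauchy–Riemann–Fueter operator `D = ∂₀ + i∂₁ + j∂₂ + k∂₃`. -/
def Dcf (f : Hq → Hq) (q : Hq) : Hq :=
  pd f 1 q + e1 * pd f e1 q + e2 * pd f e2 q + e3 * pd f e3 q

/-- The operator `D' = ∂₀ + i∂₁ + j∂₂ - k∂₃` (structural vector ψ = {1,i,j,-k}). -/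
def Dpsi (f : Hq → Hq) (q : Hq) : Hq :=
  pd f 1 q + e1 * pd f e1 q + e2 * pd f e2 q - e3 * pd f e3 q

/-- First complex component: `f = f₁ + f₂·j`, `f₁ = f⁰ + i f¹`. -/
def comp1 (f : Hq → Hq) (q : Hq) : ℂ := ⟨(f q).re, (f q).imI⟩
/-- Second complex component: `f₂ = f² + i f³`. -/
def comp2 (f : Hq → Hq) (q : Hq) : ℂ := ⟨(f q).imJ, (f q).imK⟩

/-- Embedding of `ℂ` into `Hq` as `z₁`-plane. -/
def cq (z : ℂ) : Hq := ⟨z.re, z.im, 0, 0⟩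

/-- Directional derivative of a `ℂ`-valued function on `Hq ≅ ℂ²`. -/
def pdC (g : Hq → ℂ) (v q : Hq) : ℂ := fderiv ℝ g q v

/-- Wirtinger derivative `∂/∂z̄₁`. -/
def dzb1 (g : Hq → ℂ) (q : Hq) : ℂ := (pdC g 1 q + Complex.I * pdC g e1 q) / 2
/-- Wirtinger derivative `∂/∂z̄₂`. -/
def dzb2 (g : Hq → ℂ) (q : Hq) : ℂ := (pdC g e2 q + Complex.I * pdC g e3 q) / 2
/-- Wirtinger derivative `∂/∂z₁`. -/
def dz1 (g : Hq → ℂ) (q : Hq) : ℂ := (pdC g 1 q - Complex.I * pdC g e1 q) / 2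
/-- Wirtinger derivative `∂/∂z₂`. -/
def dz2 (g : Hq → ℂ) (q : Hq) : ℂ := (pdC g e2 q - Complex.I * pdC g e3 q) / 2

/-- `f = f₁ + f₂j` is ψ-regular iff `∂f₁/∂z̄₁ = ∂f̄₂/∂z₂` and `∂f₁/∂z̄₂ = -∂f̄₂/∂z₁`. -/
def PsiSystem (f₁ f₂ : Hq → ℂ) (q : Hq) : Prop :=
  dzb1 f₁ q = dz2 (fun p => conj (f₂ p)) q ∧ dzb2 f₁ q = - dz1 (fun p => conj (f₂ p)) q
def pdR (g : Hq → ℝ) (v q : Hq) : ℝ := fderiv ℝ g q v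

/-- `∂ρ/∂z₁` for a real-valued `ρ`. -/
def dz1R (ρ : Hq → ℝ) (q : Hq) : ℂ := ((pdR ρ 1 q : ℂ) - Complex.I * (pdR ρ e1 q : ℂ)) / 2
def dz2R (ρ : Hq → ℝ) (q : Hq) : ℂ := ((pdR ρ e2 q : ℂ) - Complex.I * (pdR ρ e3 q : ℂ)) / 2
def dzb1R (ρ : Hq → ℝ) (q : Hq) : ℂ := ((pdR ρ 1 q : ℂ) + Complex.I * (pdR ρ e1 q : ℂ)) / 2
def dzb2R (ρ : Hq → ℝ) (q : Hq) : ℂ := ((pdR ρ e2 q : ℂ) + Complex.I * (pdR ρ e3 q : ℂ)) / 2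

/-- `|∂̄ρ|`. -/
def nrho (ρ : Hq → ℝ) (q : Hq) : ℝ :=
  Real.sqrt (Complex.normSq (dzb1R ρ q) + Complex.normSq (dzb2R ρ q))

/-- Partial derivatives within a set (used at boundary points for `f ∈ C¹(Ω̄)`). -/
def pdWC (s : Set Hq) (g : Hq → ℂ) (v q : Hq) : ℂ := fderivWithin ℝ g s q v

def dzb1W (s : Set Hq) (g : Hq → ℂ) (q : Hq) : ℂ := (pdWC s g 1 q + Complex.I * pdWC s g e1 q) / 2
def dzb2W (s : Set Hq) (g : Hq → ℂ) (q : Hq) : ℂ := (pdWC s g e2 q + Complex.I * pdWC s g e3 q) / 2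
def dz1W (s : Set Hq) (g : Hq → ℂ) (q : Hq) : ℂ := (pdWC s g 1 q - Complex.I * pdWC s g e1 q) / 2
def dz2W (s : Set Hq) (g : Hq → ℂ) (q : Hq) : ℂ := (pdWC s g e2 q - Complex.I * pdWC s g e3 q) / 2

/-- The normal part `∂̄ₙ g = (1/|∂̄ρ|)·Σₖ (∂g/∂z̄ₖ)(∂ρ/∂zₖ)`, derivatives taken within `s = Ω̄`. -/
def dbn (ρ : Hq → ℝ) (s : Set Hq) (g : Hq → ℂ) (q : Hq) : ℂ :=
  (dzb1W s g q * dz1R ρ q + dzb2W s g q * dz2R ρ q) / (nrho ρ q : ℂ)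

/-- The tangential Cauchy–Riemann operator `L = (1/|∂̄ρ|)((∂ρ/∂z̄₂)∂/∂z̄₁ - (∂ρ/∂z̄₁)∂/∂z̄₂)`. -/
def Lop (ρ : Hq → ℝ) (s : Set Hq) (g : Hq → ℂ) (q : Hq) : ℂ :=
  (dzb2R ρ q * dzb1W s g q - dzb1R ρ q * dzb2W s g q) / (nrho ρ q : ℂ)


section Stmt12Aux
open Filter

def pi1 : Hq →L[ℝ] ℂ :=
  { toFun := fun q => ⟨q.re, q.imI⟩
    map_add' := by intros; apply Complex.ext <;> simp
    map_smul' := by intros; apply Complex.ext <;> simp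
    cont := by
      show Continuous fun q : Hq => (⟨q.re, q.imI⟩ : ℂ)
      simp only [Complex.mk_eq_add_mul_I]
      exact (Complex.continuous_ofReal.comp Quaternion.continuous_re).add
        ((Complex.continuous_ofReal.comp Quaternion.continuous_imI).mul continuous_const) }

def pi2 : Hq →L[ℝ] ℂ :=
  { toFun := fun q => ⟨q.imJ, q.imK⟩
    map_add' := by intros; apply Complex.ext <;> simp
    map_smul' := by intros; apply Complex.ext <;> simp
    cont := by
      show Continuous fun q : Hq => (⟨q.imJ, q.imK⟩ : ℂ)
      simp only [Complex.mk_eq_add_mul_I]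
      exact (Complex.continuous_ofReal.comp Quaternion.continuous_imJ).add
        ((Complex.continuous_ofReal.comp Quaternion.continuous_imK).mul continuous_const) }

def pi2c : Hq →L[ℝ] ℂ :=
  { toFun := fun q => ⟨q.imJ, -q.imK⟩
    map_add' := by intros; apply Complex.ext <;> simp; ring
    map_smul' := by intros; apply Complex.ext <;> simp
    cont := by
      show Continuous fun q : Hq => (⟨q.imJ, -q.imK⟩ : ℂ)
      simp only [Complex.mk_eq_add_mul_I, Complex.ofReal_neg]
      exact (Complex.continuous_ofReal.comp Quaternion.continuous_imJ).add
        (((Complex.continuous_ofReal.comp Quaternion.continuous_imK).neg).mul continuous_const) }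

@[simp] lemma pi1_apply (q : Hq) : pi1 q = ⟨q.re, q.imI⟩ := rfl
@[simp] lemma pi2_apply (q : Hq) : pi2 q = ⟨q.imJ, q.imK⟩ := rfl
@[simp] lemma pi2c_apply (q : Hq) : pi2c q = ⟨q.imJ, -q.imK⟩ := rfl

lemma pi2c_eq_conj (w : Hq) : pi2c w = conj (pi2 w) := by
  apply Complex.ext <;> simp

lemma comp1_eq (f : Hq → Hq) : comp1 f = fun p => pi1 (f p) := rfl
lemma comp2_eq (f : Hq → Hq) : comp2 f = fun p => pi2 (f p) := rfl
lemma comp2c_eq (f : Hq → Hq) :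
    (fun p => conj (comp2 f p)) = fun p => pi2c (f p) := by
  funext p
  rw [show comp2 f p = pi2 (f p) from rfl, pi2c_eq_conj]

lemma pdC_comp (π : Hq →L[ℝ] ℂ) {f : Hq → Hq} {q : Hq}
    (hd : DifferentiableAt ℝ f q) (v : Hq) :
    pdC (fun p => π (f p)) v q = π (fderiv ℝ f q v) := by
  unfold pdC
  rw [show (fun p => π (f p)) = ⇑π ∘ f from rfl,
    (π.hasFDerivAt.comp q hd.hasFDerivAt).fderiv]
  rfl

lemma pdWC_comp (π : Hq →L[ℝ] ℂ) {f : Hq → Hq} {s : Set Hq} {q : Hq}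
    (hu : UniqueDiffWithinAt ℝ s q) (hd : DifferentiableWithinAt ℝ f s q) (v : Hq) :
    pdWC s (fun p => π (f p)) v q = π (fderivWithin ℝ f s q v) := by
  unfold pdWC
  rw [show (fun p => π (f p)) = ⇑π ∘ f from rfl,
    (π.hasFDerivAt.comp_hasFDerivWithinAt q hd.hasFDerivWithinAt).fderivWithin hu]
  rfl

lemma mem_tangentCone_aux {s : Set Hq} {x v : Hq}
    (h : ∀ᶠ t in nhdsWithin (0:ℝ) (Set.Ioi 0), x + t • v ∈ s) :
    v ∈ tangentConeAt ℝ s x := by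
  have hb : Tendsto (fun n : ℕ => (n:ℝ) + 1) atTop atTop :=
    tendsto_atTop_add_const_right _ 1 tendsto_natCast_atTop_atTop
  have hinv : Tendsto (fun n : ℕ => ((n:ℝ)+1)⁻¹) atTop (nhds 0) :=
    hb.inv_tendsto_atTop
  refine mem_tangentConeAt_iff_exists_seq.mpr ⟨fun n => (n:ℝ) + 1, fun n => ((n:ℝ)+1)⁻¹ • v, ?_, ?_, ?_⟩
  swap
  · have ht : Tendsto (fun n : ℕ => ((n:ℝ)+1)⁻¹) atTop (nhdsWithin 0 (Set.Ioi 0)) :=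
      tendsto_nhdsWithin_of_tendsto_nhds_of_eventually_within _ hinv
        (Eventually.of_forall fun n => Set.mem_Ioi.2 (by positivity))
    exact ht.eventually h
  · simpa using hinv.smul_const v
  · have hc : (fun n : ℕ => ((n:ℝ)+1) • (((n:ℝ)+1)⁻¹ • v)) = fun _ => v := by
      funext n; rw [smul_smul, mul_inv_cancel₀ (by positivity), one_smul]
    rw [hc]; exact tendsto_const_nhds

lemma eventually_neg_halfspace {ρ : Hq → ℝ} (hρ : ContDiff ℝ 1 ρ) {x v : Hq}
    (hx : ρ x = 0) (hv : fderiv ℝ ρ x v < 0) :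
    ∀ᶠ t in nhdsWithin (0:ℝ) (Set.Ioi 0), ρ (x + t • v) < 0 := by
  have h1 : HasDerivAt (fun t : ℝ => x + t • v) v 0 := by
    simpa using ((hasDerivAt_id (0:ℝ)).smul_const v).const_add x
  have h2 : HasDerivAt (fun t : ℝ => ρ (x + t • v)) (fderiv ℝ ρ x v) 0 := by
    have h3 : HasFDerivAt ρ (fderiv ℝ ρ x) ((fun t : ℝ => x + t • v) 0) := by
      simpa using (hρ.differentiable one_ne_zero x).hasFDerivAt
    exact h3.comp_hasDerivAt 0 h1
  rw [hasDerivAt_iff_tendsto_slope] at h2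
  have h4 : ∀ᶠ t in nhdsWithin (0:ℝ) {(0:ℝ)}ᶜ,
      slope (fun t : ℝ => ρ (x + t • v)) 0 t < 0 := h2.eventually_lt_const hv
  have h5 := h4.filter_mono (nhdsWithin_mono 0
    (fun t (ht : t ∈ Set.Ioi (0:ℝ)) => (ne_of_gt ht : t ≠ 0)))
  filter_upwards [h5, self_mem_nhdsWithin] with t hts htpos
  have htpos' : (0:ℝ) < t := htpos
  have hsl : slope (fun t : ℝ => ρ (x + t • v)) 0 t = ρ (x + t • v) / t := by
    simp [slope_def_field, hx]
  rw [hsl] at hts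
  rw [div_neg_iff] at hts
  rcases hts with ⟨_, h⟩ | ⟨h, _⟩
  · linarith
  · exact h

lemma uniqueDiffOn_closure_aux {ρ : Hq → ℝ} (hρ : ContDiff ℝ 1 ρ)
    {Ω : Set Hq} (hΩ : Ω = {q | ρ q < 0})
    (hdρ : ∀ q ∈ frontier Ω, fderiv ℝ ρ q ≠ 0) : UniqueDiffOn ℝ (closure Ω) := by
  have hΩopen : IsOpen Ω := by
    rw [hΩ]; exact isOpen_lt hρ.continuous continuous_const
  intro x hx
  by_cases hxΩ : x ∈ Ω
  · exact uniqueDiffWithinAt_of_mem_nhds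
      (Filter.mem_of_superset (hΩopen.mem_nhds hxΩ) subset_closure)
  · have hxfr : x ∈ frontier Ω := ⟨hx, by rwa [hΩopen.interior_eq]⟩
    have hx0 : ρ x = 0 := by
      have hle : ρ x ≤ 0 := by
        have hcl : closure Ω ⊆ {q | ρ q ≤ 0} := by
          refine closure_minimal ?_ (isClosed_le hρ.continuous continuous_const)
          rw [hΩ]; intro q hq; exact le_of_lt (show ρ q < 0 from hq)
        exact hcl hx
      have hge : ¬ ρ x < 0 := by rw [hΩ] at hxΩ; exact hxΩ
      linarith
    have htc : ∀ v : Hq, fderiv ℝ ρ x v < 0 → v ∈ tangentConeAt ℝ (closure Ω) x := by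
      intro v hv
      apply tangentConeAt_mono subset_closure
      apply mem_tangentCone_aux
      filter_upwards [eventually_neg_halfspace hρ hx0 hv] with t ht
      rw [hΩ]; exact ht
    obtain ⟨w, hw⟩ : ∃ w, fderiv ℝ ρ x w ≠ 0 := by
      by_contra hcon; push_neg at hcon
      exact hdρ x hxfr (ContinuousLinearMap.ext fun w => by simp [hcon w])
    have hv0' : ∃ v0 : Hq, fderiv ℝ ρ x v0 < 0 := by
      rcases lt_or_gt_of_ne hw with h | h
      · exact ⟨w, h⟩
      · exact ⟨-w, by simpa using h⟩
    obtain ⟨v0, hv0⟩ := hv0'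
    refine ⟨?_, subset_closure hx⟩
    have hspan : Submodule.span ℝ (tangentConeAt ℝ (closure Ω) x) = ⊤ := by
      rw [Submodule.eq_top_iff']
      intro u
      have hmem : ∀ v : Hq, fderiv ℝ ρ x v < 0 →
          v ∈ Submodule.span ℝ (tangentConeAt ℝ (closure Ω) x) :=
        fun v hv => Submodule.subset_span (htc v hv)
      set c := fderiv ℝ ρ x u with hc
      set t : ℝ := (|c| + 1) / (-(fderiv ℝ ρ x v0)) with ht
      have htpos : 0 < t := div_pos (by positivity) (by linarith)
      have hne : fderiv ℝ ρ x v0 ≠ 0 := ne_of_lt hv0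
      have h1 : fderiv ℝ ρ x (u + t • v0) < 0 := by
        rw [map_add, map_smul, smul_eq_mul]
        have heq : t * fderiv ℝ ρ x v0 = -(|c| + 1) := by
          rw [ht]
          field_simp
        rw [heq]
        have := le_abs_self c
        linarith
      have h2 := hmem _ h1
      have h3 := hmem v0 hv0
      have hu : u = (u + t • v0) - t • v0 := (add_sub_cancel_right u (t • v0)).symm
      rw [hu]
      exact Submodule.sub_mem _ h2 (Submodule.smul_mem _ t h3)
    rw [hspan, Submodule.top_coe]
    exact dense_univ

lemma eq_zero_of_eq_zero_on {G : Hq → ℂ} {Ω : Set Hq} (hc : ContinuousOn G (closure Ω))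
    (h0 : ∀ q ∈ Ω, G q = 0) {ζ : Hq} (hζ : ζ ∈ closure Ω) : G ζ = 0 :=
  Set.EqOn.of_subset_closure (g := fun _ => (0:ℂ)) (fun q hq => h0 q hq) hc
    continuousOn_const subset_closure subset_rfl hζ

end Stmt12Aux

/-- if `f = f₁ + f₂j` is ψ-regular on the bounded `C¹` domain `Ω = {ρ < 0}` and
`C¹` up to the boundary, then `∂̄ₙf₁ = -conj(L f₂)` and `∂̄ₙf₂ = conj(L f₁)` on `∂Ω`, i.e.
`(∂̄ₙ - jL)f = 0` on `∂Ω`. -/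
theorem stmt12 (ρ : Hq → ℝ) (Ω : Set Hq) (hΩ : Ω = {q | ρ q < 0})
    (hbd : Bornology.IsBounded Ω) (hρ : ContDiff ℝ 1 ρ)
    (hdρ : ∀ q ∈ frontier Ω, fderiv ℝ ρ q ≠ 0)
    (f : Hq → Hq) (hf : ContDiffOn ℝ 1 f (closure Ω))
    (hreg : ∀ q ∈ Ω, PsiSystem (comp1 f) (comp2 f) q) :
    ∀ ζ ∈ frontier Ω,
      dbn ρ (closure Ω) (comp1 f) ζ = - conj (Lop ρ (closure Ω) (comp2 f) ζ) ∧
      dbn ρ (closure Ω) (comp2 f) ζ = conj (Lop ρ (closure Ω) (comp1 f) ζ) := by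
  intro ζ hζ
  have hΩopen : IsOpen Ω := by
    rw [hΩ]; exact isOpen_lt hρ.continuous continuous_const
  have hUD : UniqueDiffOn ℝ (closure Ω) := uniqueDiffOn_closure_aux hρ hΩ hdρ
  have hζs : ζ ∈ closure Ω := frontier_subset_closure hζ
  set F := fun q => fderivWithin ℝ f (closure Ω) q with hFdef
  have hFc : ContinuousOn F (closure Ω) := hf.continuousOn_fderivWithin hUD le_rfl
  have hp1 : ∀ q ∈ closure Ω, ∀ v, pdWC (closure Ω) (comp1 f) v q = pi1 (F q v) := by
    intro q hq v
    rw [comp1_eq]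
    exact pdWC_comp pi1 (hUD q hq) (hf.differentiableOn one_ne_zero q hq) v
  have hp2 : ∀ q ∈ closure Ω, ∀ v, pdWC (closure Ω) (comp2 f) v q = pi2 (F q v) := by
    intro q hq v
    rw [comp2_eq]
    exact pdWC_comp pi2 (hUD q hq) (hf.differentiableOn one_ne_zero q hq) v
  have hnh : ∀ q ∈ Ω, closure Ω ∈ nhds q :=
    fun q hq => Filter.mem_of_superset (hΩopen.mem_nhds hq) subset_closure
  have hdA : ∀ q ∈ Ω, DifferentiableAt ℝ f q :=
    fun q hq => (hf.contDiffAt (hnh q hq)).differentiableAt one_ne_zero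
  have hWq : ∀ q ∈ Ω, F q = fderiv ℝ f q :=
    fun q hq => fderivWithin_of_mem_nhds (hnh q hq)
  set G1 := fun q => (pi1 (F q 1) + Complex.I * pi1 (F q e1)) -
      conj (pi2 (F q e2) + Complex.I * pi2 (F q e3)) with hG1def
  set G2 := fun q => (pi1 (F q e2) + Complex.I * pi1 (F q e3)) +
      conj (pi2 (F q 1) + Complex.I * pi2 (F q e1)) with hG2def
  have hcv : ∀ v : Hq, ContinuousOn (fun q => F q v) (closure Ω) :=
    fun v => hFc.clm_apply continuousOn_const
  have hc1 : ContinuousOn G1 (closure Ω) := by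
    apply ContinuousOn.sub
    · exact (pi1.continuous.comp_continuousOn (hcv 1)).add
        (continuousOn_const.mul (pi1.continuous.comp_continuousOn (hcv e1)))
    · exact continuous_star.comp_continuousOn
        ((pi2.continuous.comp_continuousOn (hcv e2)).add
          (continuousOn_const.mul (pi2.continuous.comp_continuousOn (hcv e3))))
  have hc2 : ContinuousOn G2 (closure Ω) := by
    apply ContinuousOn.add
    · exact (pi1.continuous.comp_continuousOn (hcv e2)).add
        (continuousOn_const.mul (pi1.continuous.comp_continuousOn (hcv e3)))
    · exact continuous_star.comp_continuousOn
        ((pi2.continuous.comp_continuousOn (hcv 1)).add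
          (continuousOn_const.mul (pi2.continuous.comp_continuousOn (hcv e1))))
  have hG1zero : ∀ q ∈ Ω, G1 q = 0 := by
    intro q hq
    obtain ⟨h1, _⟩ := hreg q hq
    unfold dzb1 dz2 at h1
    rw [comp1_eq, comp2c_eq] at h1
    rw [pdC_comp pi1 (hdA q hq) 1, pdC_comp pi1 (hdA q hq) e1,
        pdC_comp pi2c (hdA q hq) e2, pdC_comp pi2c (hdA q hq) e3] at h1
    rw [← hWq q hq] at h1
    simp only [pi2c_eq_conj] at h1
    simp only [hG1def, map_add, map_mul, Complex.conj_I]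
    linear_combination 2 * h1
  have hG2zero : ∀ q ∈ Ω, G2 q = 0 := by
    intro q hq
    obtain ⟨_, h2⟩ := hreg q hq
    unfold dzb2 dz1 at h2
    rw [comp1_eq, comp2c_eq] at h2
    rw [pdC_comp pi1 (hdA q hq) e2, pdC_comp pi1 (hdA q hq) e3,
        pdC_comp pi2c (hdA q hq) 1, pdC_comp pi2c (hdA q hq) e1] at h2
    rw [← hWq q hq] at h2
    simp only [pi2c_eq_conj] at h2
    simp only [hG2def, map_add, map_mul, Complex.conj_I]
    linear_combination 2 * h2
  have hg1 : G1 ζ = 0 := eq_zero_of_eq_zero_on hc1 hG1zero hζs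
  have hg2 : G2 ζ = 0 := eq_zero_of_eq_zero_on hc2 hG2zero hζs
  simp only [hG1def] at hg1
  simp only [hG2def] at hg2
  simp only [map_add, map_sub, map_mul, map_neg, Complex.conj_I] at hg1 hg2
  have hg1' := congrArg (starRingEnd ℂ) hg1
  have hg2' := congrArg (starRingEnd ℂ) hg2
  simp only [map_add, map_sub, map_mul, map_neg, map_zero, Complex.conj_conj,
    Complex.conj_I] at hg1' hg2'
  constructor
  · simp only [dbn, Lop, dzb1W, dzb2W]
    rw [hp1 ζ hζs 1, hp1 ζ hζs e1, hp1 ζ hζs e2, hp1 ζ hζs e3,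
        hp2 ζ hζs 1, hp2 ζ hζs e1, hp2 ζ hζs e2, hp2 ζ hζs e3]
    rw [map_div₀, Complex.conj_ofReal, ← neg_div]
    congr 1
    simp only [dz1R, dz2R, dzb1R, dzb2R]
    simp only [map_add, map_sub, map_mul, map_neg, map_div₀, map_ofNat,
      Complex.conj_I, Complex.conj_ofReal]
    linear_combination (((pdR ρ 1 ζ : ℂ) - Complex.I * (pdR ρ e1 ζ : ℂ))/4) * hg1 +
      (((pdR ρ e2 ζ : ℂ) - Complex.I * (pdR ρ e3 ζ : ℂ))/4) * hg2
  · simp only [dbn, Lop, dzb1W, dzb2W]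
    rw [hp1 ζ hζs 1, hp1 ζ hζs e1, hp1 ζ hζs e2, hp1 ζ hζs e3,
        hp2 ζ hζs 1, hp2 ζ hζs e1, hp2 ζ hζs e2, hp2 ζ hζs e3]
    rw [map_div₀, Complex.conj_ofReal]
    congr 1
    simp only [dz1R, dz2R, dzb1R, dzb2R]
    simp only [map_add, map_sub, map_mul, map_neg, map_div₀, map_ofNat,
      Complex.conj_I, Complex.conj_ofReal]
    linear_combination (-(((pdR ρ e2 ζ : ℂ) - Complex.I * (pdR ρ e3 ζ : ℂ))/4)) * hg1' +
      (((pdR ρ 1 ζ : ℂ) - Complex.I * (pdR ρ e1 ζ : ℂ))/4) * hg2'
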